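/- arXiv:2502.12309 — 4 statements merged into one kernel-verified Lean document; each statement's English description precedes it below -/
import Mathlib

section
/- Let M be a nonnegative irreducible n×n matrix with n ≥ 2 and ρ(M) = 1. For δ ∈ (0,1), let k(δ) be the unique solution of k(δ)^⊤ = δ k(δ)^⊤ M + z^⊤ where z has nonnegative entries summing to 1. Then as δ → 1⁻, the rescaled vector (1−δ)k(δ) converges to a left Perron eigenvector of M (a nonnegative eigenvector with eigenvalue 1). -/
/-!
A unimodular eigenvalue `μ` of `M` has a complex left eigenvector `v`, and by the triangle
inequality `|v| ≤ |v| M`. If `|v| M ≠ |v|`, irreducibility spreads the defect to every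
coordinate, so `(1 + ε) |v| ≤ |v| M ^ T` for some `T`, and Gelfand's formula then gives
`ρ(M) > 1`. Hence `M` and `Mᵀ` have positive fixed vectors `x` and `w`.

The vectors `(1 - δ) k(δ)` are nonnegative (the minimum of `k(δ)_j / x_j` cannot be negative)
and have `(1 - δ) k(δ) ⬝ w = z ⬝ w`, so they stay in a compact set. A cluster point `y` as
`δ → 1` satisfies `y M = y`, so it is a multiple of `x`, and `y ⬝ w = z ⬝ w` fixes the multiple.
-/

open Matrix Filter Topology

/-- Spectral radius of a real matrix: the maximum modulus of its complex eigenvalues. -/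
noncomputable def specRad {n : ℕ} (M : Matrix (Fin n) (Fin n) ℝ) : ℝ :=
  sSup {r : ℝ | ∃ μ : ℂ, μ ∈ spectrum ℂ (M.map (algebraMap ℝ ℂ)) ∧ r = ‖μ‖}

/-- A nonnegative matrix is irreducible if its digraph is strongly connected:
for all `i j` there is a walk of positive length with positive weight from `i` to `j`. -/
def MatIrreducible {n : ℕ} (M : Matrix (Fin n) (Fin n) ℝ) : Prop :=
  ∀ i j, ∃ t : ℕ, 0 < t ∧ 0 < (M ^ t) i j

-- Gelfand's formula needs a Banach-algebra norm on matrices; the `ℓ∞` operator norm is the one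
-- that dominates row sums.
attribute [local instance] Matrix.linftyOpNormedRing Matrix.linftyOpNormedAlgebra

theorem exists_one_lt_smul_le_of_forall_lt {ι : Type*} [Finite ι] {x y : ι → ℝ}
    (h : ∀ j, x j < y j) : ∃ r : ℝ, 1 < r ∧ r • x ≤ y := by
  have hnear : ∀ j, ∀ᶠ r in 𝓝 (1 : ℝ), r * x j < y j := fun j =>
    ((continuous_mul_const (x j)).tendsto' 1 (x j) (one_mul _)).eventually_lt_const (h j)
  obtain ⟨r, hr, hr1⟩ :=
    (((eventually_all.2 hnear).filter_mono nhdsWithin_le_nhds).and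
      (self_mem_nhdsWithin : Set.Ioi (1 : ℝ) ∈ 𝓝[>] 1)).exists
  exact ⟨r, hr1, fun j => (hr j).le⟩

theorem spectrum.spectralRadius_pow_le_pow_spectralRadius {A : Type*} [Ring A] [Algebra ℂ A]
    (a : A) {n : ℕ} (hn : 0 < n) : spectralRadius ℂ (a ^ n) ≤ spectralRadius ℂ a ^ n := by
  refine iSup₂_le fun μ hμ => ?_
  obtain ⟨ν, hν, rfl⟩ := spectrum.map_pow_of_pos (𝕜 := ℂ) a hn ▸ hμ
  rw [nnnorm_pow, ENNReal.coe_pow]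
  exact pow_le_pow_left' (le_iSup₂ (α := ENNReal) ν hν) n

namespace Matrix

variable {ι : Type*} [Fintype ι]

section Spectrum

variable [DecidableEq ι] {K : Type*}

theorem spectrum_transpose [Field K] (B : Matrix ι ι K) :
    spectrum K Bᵀ = spectrum K B := by
  ext μ
  simp only [mem_spectrum_iff_isRoot_charpoly, charpoly_transpose]

theorem spectralRadius_transpose [NormedField K] (B : Matrix ι ι K) :
    spectralRadius K Bᵀ = spectralRadius K B := by
  simp only [spectralRadius, spectrum_transpose]

theorem exists_vecMul_eq_smul_of_mem_spectrum [Field K] {B : Matrix ι ι K} {μ : K}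
    (hμ : μ ∈ spectrum K B) : ∃ v ≠ 0, v ᵥ* B = μ • v := by
  have hdet : (algebraMap K (Matrix ι ι K) μ - B).det = 0 := by
    rwa [spectrum.mem_iff, isUnit_iff_isUnit_det, isUnit_iff_ne_zero, not_not] at hμ
  obtain ⟨v, hv, hvB⟩ := exists_vecMul_eq_zero_iff.2 hdet
  refine ⟨v, hv, ?_⟩
  rw [vecMul_sub, Algebra.algebraMap_eq_smul_one, vecMul_smul, vecMul_one, sub_eq_zero] at hvB
  exact hvB.symm

end Spectrum

variable {A : Matrix ι ι ℝ}

theorem vecMul_le_vecMul_of_nonneg (hA : ∀ i j, 0 ≤ A i j) {x y : ι → ℝ} (h : x ≤ y) :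
    x ᵥ* A ≤ y ᵥ* A := fun j =>
  Finset.sum_le_sum fun i _ => mul_le_mul_of_nonneg_right (h i) (hA i j)

theorem mul_le_vecMul_apply (hA : ∀ i j, 0 ≤ A i j) {x : ι → ℝ} (hx : 0 ≤ x) (i j : ι) :
    x i * A i j ≤ (x ᵥ* A) j :=
  Finset.single_le_sum (f := fun l => x l * A l j) (fun l _ => mul_nonneg (hx l) (hA l j))
    (Finset.mem_univ i)

theorem norm_smul_le_vecMul_norm (hA : ∀ i j, 0 ≤ A i j) {v : ι → ℂ} {μ : ℂ}
    (h : v ᵥ* A.map (algebraMap ℝ ℂ) = μ • v) :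
    ‖μ‖ • (fun i => ‖v i‖) ≤ (fun i => ‖v i‖) ᵥ* A := fun j => by
  calc ‖μ‖ * ‖v j‖ = ‖∑ i, v i * A i j‖ := by
        rw [← norm_mul, ← smul_eq_mul, ← Pi.smul_apply, ← h]; rfl
    _ ≤ ∑ i, ‖v i‖ * A i j := by
        refine (norm_sum_le _ _).trans (Finset.sum_le_sum fun i _ => ?_)
        rw [norm_mul, Complex.norm_real, Real.norm_of_nonneg (hA i j)]

section Resolvent

variable {x w z v : ι → ℝ} {δ : ℝ}

theorem nonneg_of_eq_smul_vecMul_add [Nonempty ι] (hA : ∀ i j, 0 ≤ A i j) (hx : ∀ j, 0 < x j)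
    (hxA : x ᵥ* A ≤ x) (hδ0 : 0 ≤ δ) (hδ1 : δ < 1) (hz : 0 ≤ z) (hv : v = δ • v ᵥ* A + z) :
    0 ≤ v := by
  obtain ⟨j₀, -, hj₀⟩ := Finset.univ.exists_min_image (fun j => v j / x j) Finset.univ_nonempty
  set c := v j₀ / x j₀
  have hvc : c • x ≤ v := fun j => by
    simpa [← le_div_iff₀ (hx j)] using hj₀ j (Finset.mem_univ j)
  suffices hc : 0 ≤ c from fun j => (mul_nonneg hc (hx j).le).trans (hvc j)
  by_contra! hc
  -- `v ≥ c • x` propagates to `v = δ • v ᵥ* A + z ≥ δ c • x`, beating the minimum since `δ c > c`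
  have hvA : c • x ≤ v ᵥ* A :=
    (smul_le_smul_of_nonpos_left hxA hc.le).trans
      ((smul_vecMul c x A).symm.trans_le (vecMul_le_vecMul_of_nonneg hA hvc))
  have hj : v j₀ = δ * (v ᵥ* A) j₀ + z j₀ := by simpa using congrFun hv j₀
  have hcx : c * x j₀ = v j₀ := div_mul_cancel₀ _ (hx j₀).ne'
  have hgap : 0 < (1 - δ) * -c * x j₀ := mul_pos (mul_pos (by linarith) (by linarith)) (hx j₀)
  have hδvA : δ * (c * x j₀) ≤ δ * (v ᵥ* A) j₀ := mul_le_mul_of_nonneg_left (hvA j₀) hδ0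
  linarith [show 0 ≤ z j₀ from hz j₀]

theorem one_sub_smul_dotProduct_eq (hAw : A *ᵥ w = w) (hv : v = δ • v ᵥ* A + z) :
    ((1 - δ) • v) ⬝ᵥ w = z ⬝ᵥ w := by
  have h : v ⬝ᵥ w = δ * (v ⬝ᵥ w) + z ⬝ᵥ w := by
    conv_lhs => rw [hv]
    rw [add_dotProduct, smul_dotProduct, ← dotProduct_mulVec, hAw, smul_eq_mul]
  rw [smul_dotProduct, smul_eq_mul]
  linarith

theorem isCompact_setOf_nonneg_dotProduct_eq (hw : ∀ j, 0 < w j) (s : ℝ) :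
    IsCompact {y : ι → ℝ | 0 ≤ y ∧ y ⬝ᵥ w = s} := by
  refine (isCompact_Icc (a := 0) (b := fun j => s / w j)).of_isClosed_subset
    ((isClosed_le continuous_const continuous_id).inter
      (isClosed_eq (continuous_id.dotProduct continuous_const) continuous_const)) ?_
  rintro y ⟨hy, rfl⟩
  refine ⟨hy, fun j => (le_div_iff₀ (hw j)).2 ?_⟩
  exact Finset.single_le_sum (f := fun i => y i * w i) (fun i _ => mul_nonneg (hy i) (hw i).le)
    (Finset.mem_univ j)

theorem vecMul_eq_of_mapClusterPt {k : ℝ → ι → ℝ} {y : ι → ℝ}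
    (hk : ∀ δ ∈ Set.Ioo (0 : ℝ) 1, k δ = δ • k δ ᵥ* A + z)
    (hy : MapClusterPt y (𝓝[<] 1) fun δ => (1 - δ) • k δ) : y ᵥ* A = y := by
  obtain ⟨U, hU, hUy⟩ := mapClusterPt_iff_ultrafilter.1 hy
  have hδ : Tendsto id (U : Filter ℝ) (𝓝 1) := hU.trans nhdsWithin_le_nhds
  have hlim : Tendsto (fun δ => δ • ((1 - δ) • k δ) ᵥ* A + (1 - δ) • z) U
      (𝓝 ((1 : ℝ) • y ᵥ* A + (1 - 1 : ℝ) • z)) :=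
    (hδ.smul ((continuous_id.matrix_vecMul continuous_const).tendsto y |>.comp hUy)).add
      ((tendsto_const_nhds.sub hδ).smul tendsto_const_nhds)
  have heq : (fun δ => (1 - δ) • k δ) =ᶠ[U]
      fun δ => δ • ((1 - δ) • k δ) ᵥ* A + (1 - δ) • z := by
    filter_upwards [hU (Ioo_mem_nhdsLT zero_lt_one)] with δ hδ'
    conv_lhs => rw [hk δ hδ']
    rw [smul_vecMul, smul_add, smul_comm]
  simpa using tendsto_nhds_unique hlim (hUy.congr' heq)

end Resolvent

variable [DecidableEq ι]

theorem monotone_vecMul_pow (hA : ∀ i j, 0 ≤ A i j) {x : ι → ℝ} (h : x ≤ x ᵥ* A) :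
    Monotone fun t : ℕ => x ᵥ* A ^ t :=
  monotone_nat_of_le_succ fun t => by
    simpa only [pow_succ', ← vecMul_vecMul] using
      vecMul_le_vecMul_of_nonneg (pow_apply_nonneg hA t) h

theorem antitone_vecMul_pow (hA : ∀ i j, 0 ≤ A i j) {x : ι → ℝ} (h : x ᵥ* A ≤ x) :
    Antitone fun t : ℕ => x ᵥ* A ^ t :=
  antitone_nat_of_succ_le fun t => by
    simpa only [pow_succ', ← vecMul_vecMul] using
      vecMul_le_vecMul_of_nonneg (pow_apply_nonneg hA t) h

theorem pow_smul_le_vecMul_pow (hA : ∀ i j, 0 ≤ A i j) {x : ι → ℝ} {r : ℝ} (hr : 0 ≤ r)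
    (h : r • x ≤ x ᵥ* A) (m : ℕ) : r ^ m • x ≤ x ᵥ* A ^ m := by
  induction m with
  | zero => simp
  | succ m ih =>
    calc r ^ (m + 1) • x = r ^ m • (r • x) := by rw [pow_succ, mul_smul]
      _ ≤ r ^ m • (x ᵥ* A) := smul_le_smul_of_nonneg_left h (pow_nonneg hr m)
      _ = (r ^ m • x) ᵥ* A := (smul_vecMul _ _ _).symm
      _ ≤ (x ᵥ* A ^ m) ᵥ* A := vecMul_le_vecMul_of_nonneg hA ih
      _ = x ᵥ* A ^ (m + 1) := by rw [vecMul_vecMul, pow_succ]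

theorem sum_apply_le_norm_map (hA : ∀ i j, 0 ≤ A i j) (i : ι) :
    ∑ j, A i j ≤ ‖A.map (algebraMap ℝ ℂ)‖ := by
  have hrow : ∑ j, ‖A.map (algebraMap ℝ ℂ) i j‖₊ ≤ ‖A.map (algebraMap ℝ ℂ)‖₊ := by
    rw [linfty_opNNNorm_def]
    exact Finset.le_sup (f := fun i => ∑ j, ‖A.map (algebraMap ℝ ℂ) i j‖₊) (Finset.mem_univ i)
  calc ∑ j, A i j = ∑ j, ‖A.map (algebraMap ℝ ℂ) i j‖ := by
        refine Finset.sum_congr rfl fun j _ => ?_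
        rw [map_apply, Complex.coe_algebraMap, Complex.norm_real, Real.norm_of_nonneg (hA i j)]
    _ ≤ ‖A.map (algebraMap ℝ ℂ)‖ := by simpa using NNReal.coe_le_coe.2 hrow

theorem ofReal_le_spectralRadius_of_smul_le_vecMul (hA : ∀ i j, 0 ≤ A i j) {x : ι → ℝ}
    (hx : 0 ≤ x) (hx0 : x ≠ 0) {r : ℝ} (h : r • x ≤ x ᵥ* A) :
    ENNReal.ofReal r ≤ spectralRadius ℂ (A.map (algebraMap ℝ ℂ)) := by
  rcases le_or_gt r 0 with hr | hr
  · simp [ENNReal.ofReal_eq_zero.2 hr]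
  have hsum : 0 < ∑ i, x i := by
    obtain ⟨i, hi⟩ := Function.ne_iff.mp hx0
    exact Finset.sum_pos' (fun j _ => hx j) ⟨i, Finset.mem_univ i, (hx i).lt_of_ne' hi⟩
  -- summing `r ^ m • x ≤ x ᵥ* A ^ m` over all coordinates bounds `r ^ m` by a row sum of `A ^ m`
  have hnorm : ∀ m : ℕ, r ^ m ≤ ‖A.map (algebraMap ℝ ℂ) ^ m‖ := fun m => by
    have hAm := pow_apply_nonneg hA m
    refine le_of_mul_le_mul_right ?_ hsum
    calc r ^ m * ∑ i, x i = ∑ j, (r ^ m • x) j := by simp [Finset.mul_sum]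
      _ ≤ ∑ j, (x ᵥ* A ^ m) j := Finset.sum_le_sum fun j _ => pow_smul_le_vecMul_pow hA hr.le h m j
      _ = ∑ i, x i * ∑ j, (A ^ m) i j := by
        simp only [vecMul, dotProduct, Finset.mul_sum]; exact Finset.sum_comm
      _ ≤ ∑ i, x i * ‖A.map (algebraMap ℝ ℂ) ^ m‖ := by
        gcongr with i
        · exact hx i
        · rw [← Matrix.map_pow A (algebraMap ℝ ℂ)]; exact sum_apply_le_norm_map hAm i
      _ = ‖A.map (algebraMap ℝ ℂ) ^ m‖ * ∑ i, x i := by rw [← Finset.sum_mul, mul_comm]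
  refine ge_of_tendsto (spectrum.pow_norm_pow_one_div_tendsto_nhds_spectralRadius _)
    (eventually_atTop.2 ⟨1, fun m hm => ENNReal.ofReal_le_ofReal ?_⟩)
  calc r = (r ^ m) ^ (1 / m : ℝ) := by
        rw [one_div, Real.pow_rpow_inv_natCast hr.le (by omega)]
    _ ≤ _ := Real.rpow_le_rpow (by positivity) (hnorm m) (by positivity)

namespace IsIrreducible

variable {x y w z : ι → ℝ}

theorem pos_of_vecMul_le (hA : A.IsIrreducible) (hx : 0 ≤ x) (hx0 : x ≠ 0)
    (h : x ᵥ* A ≤ x) (j : ι) : 0 < x j := by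
  obtain ⟨i, hi⟩ := Function.ne_iff.mp hx0
  obtain ⟨t, -, ht⟩ := (isIrreducible_iff_exists_pow_pos hA.nonneg).1 hA i j
  calc 0 < x i * (A ^ t) i j := mul_pos ((hx i).lt_of_ne' hi) ht
    _ ≤ (x ᵥ* A ^ t) j := mul_le_vecMul_apply (pow_apply_nonneg hA.nonneg t) hx i j
    _ ≤ (x ᵥ* A ^ 0) j := antitone_vecMul_pow hA.nonneg h t.zero_le j
    _ = x j := by simp

theorem eq_smul_of_vecMul_eq [Nonempty ι] (hA : A.IsIrreducible) (hx : ∀ j, 0 < x j)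
    (hxA : x ᵥ* A = x) (hyA : y ᵥ* A = y) : ∃ a : ℝ, y = a • x := by
  obtain ⟨j₀, -, hj₀⟩ := Finset.univ.exists_min_image (fun j => y j / x j) Finset.univ_nonempty
  refine ⟨y j₀ / x j₀, sub_eq_zero.1 ?_⟩
  by_contra hne
  have hd : 0 ≤ y - (y j₀ / x j₀) • x := fun j => by
    simpa [sub_nonneg, ← le_div_iff₀ (hx j)] using hj₀ j (Finset.mem_univ j)
  have hdA : (y - (y j₀ / x j₀) • x) ᵥ* A = y - (y j₀ / x j₀) • x := by
    rw [sub_vecMul, smul_vecMul, hxA, hyA]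
  have := hA.pos_of_vecMul_le hd hne hdA.le j₀
  simp [div_mul_cancel₀ _ (hx j₀).ne'] at this

theorem vecMul_eq_of_le_vecMul (hA : A.IsIrreducible)
    (hρ : spectralRadius ℂ (A.map (algebraMap ℝ ℂ)) ≤ 1) (hx : 0 ≤ x) (hx0 : x ≠ 0)
    (h : x ≤ x ᵥ* A) : x ᵥ* A = x := by
  by_contra hne
  obtain ⟨i, hi⟩ := Function.ne_iff.mp (sub_ne_zero.2 hne)
  have hsi : 0 < (x ᵥ* A - x) i := (sub_nonneg.2 (h i)).lt_of_ne' hi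
  choose t ht using (isIrreducible_iff_exists_pow_pos hA.nonneg).1 hA i
  set T := Finset.univ.sup t + 1
  -- the defect `x ᵥ* A - x` reaches every coordinate after `t j` steps, so `x ᵥ* A ^ T > x`
  have hgain : ∀ j, x j < (x ᵥ* A ^ T) j := fun j => by
    have hstep : x ᵥ* A ^ (t j + 1) = x ᵥ* A ^ t j + (x ᵥ* A - x) ᵥ* A ^ t j := by
      rw [pow_succ', ← vecMul_vecMul, ← add_vecMul, add_sub_cancel]
    calc x j = (x ᵥ* A ^ 0) j := by simp
      _ ≤ (x ᵥ* A ^ t j) j := monotone_vecMul_pow hA.nonneg h (t j).zero_le j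
      _ < (x ᵥ* A ^ t j) j + (x ᵥ* A - x) i * (A ^ t j) i j :=
        lt_add_of_pos_right _ (mul_pos hsi (ht j).2)
      _ ≤ (x ᵥ* A ^ (t j + 1)) j := by
        rw [hstep, Pi.add_apply]
        exact (add_le_add_iff_left _).2
          (mul_le_vecMul_apply (pow_apply_nonneg hA.nonneg _) (sub_nonneg.2 h) i j)
      _ ≤ (x ᵥ* A ^ T) j := monotone_vecMul_pow hA.nonneg h
          (Nat.succ_le_succ (Finset.le_sup (Finset.mem_univ j))) j
  obtain ⟨r, hr1, hr⟩ := exists_one_lt_smul_le_of_forall_lt hgain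
  have hρT : spectralRadius ℂ ((A ^ T).map (algebraMap ℝ ℂ)) ≤ 1 := by
    rw [Matrix.map_pow]
    exact (spectrum.spectralRadius_pow_le_pow_spectralRadius _ (by omega)).trans
      (pow_le_one₀ zero_le hρ)
  exact (ENNReal.one_lt_ofReal.2 hr1).not_ge <|
    (ofReal_le_spectralRadius_of_smul_le_vecMul (pow_apply_nonneg hA.nonneg T) hx hx0 hr).trans hρT

theorem exists_pos_vecMul_eq (hA : A.IsIrreducible)
    (hρ : spectralRadius ℂ (A.map (algebraMap ℝ ℂ)) ≤ 1) {μ : ℂ}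
    (hμ : μ ∈ spectrum ℂ (A.map (algebraMap ℝ ℂ))) (hμ1 : ‖μ‖ = 1) :
    ∃ x : ι → ℝ, (∀ j, 0 < x j) ∧ x ᵥ* A = x := by
  obtain ⟨v, hv, hvA⟩ := exists_vecMul_eq_smul_of_mem_spectrum hμ
  have hnn : 0 ≤ fun i => ‖v i‖ := fun i => norm_nonneg _
  have hne : (fun i => ‖v i‖) ≠ 0 := fun h => hv (funext fun i => norm_eq_zero.1 (congrFun h i))
  have hsup := norm_smul_le_vecMul_norm hA.nonneg hvA
  rw [hμ1, one_smul] at hsup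
  have hfix := hA.vecMul_eq_of_le_vecMul hρ hnn hne hsup
  exact ⟨_, hA.pos_of_vecMul_le hnn hne hfix.le, hfix⟩

theorem tendsto_one_sub_smul [Nonempty ι] (hA : A.IsIrreducible)
    (hx : ∀ j, 0 < x j) (hxA : x ᵥ* A = x) (hw : ∀ j, 0 < w j) (hAw : A *ᵥ w = w) (hz : 0 ≤ z)
    {k : ℝ → ι → ℝ} (hk : ∀ δ ∈ Set.Ioo (0 : ℝ) 1, k δ = δ • k δ ᵥ* A + z) :
    Tendsto (fun δ => (1 - δ) • k δ) (𝓝[<] 1) (𝓝 ((z ⬝ᵥ w / x ⬝ᵥ w) • x)) := by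
  have hxw : 0 < x ⬝ᵥ w :=
    Finset.sum_pos (fun j _ => mul_pos (hx j) (hw j)) Finset.univ_nonempty
  have hmem : ∀ᶠ δ in 𝓝[<] 1, (1 - δ) • k δ ∈ {y : ι → ℝ | 0 ≤ y ∧ y ⬝ᵥ w = z ⬝ᵥ w} := by
    filter_upwards [Ioo_mem_nhdsLT zero_lt_one] with δ hδ
    exact ⟨smul_nonneg (sub_nonneg.2 hδ.2.le) (nonneg_of_eq_smul_vecMul_add hA.nonneg hx hxA.le
      hδ.1.le hδ.2 hz (hk δ hδ)), one_sub_smul_dotProduct_eq hAw (hk δ hδ)⟩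
  refine (isCompact_setOf_nonneg_dotProduct_eq hw _).tendsto_nhds_of_unique_mapClusterPt hmem ?_
  rintro y ⟨-, hyw⟩ hy
  obtain ⟨a, rfl⟩ := hA.eq_smul_of_vecMul_eq hx hxA (vecMul_eq_of_mapClusterPt hk hy)
  rw [smul_dotProduct, smul_eq_mul] at hyw
  rw [← hyw, mul_div_cancel_right₀ _ hxw.ne']

end IsIrreducible

end Matrix

theorem specRad_eq_sSup_image {n : ℕ} (M : Matrix (Fin n) (Fin n) ℝ) :
    specRad M = sSup ((‖·‖) '' spectrum ℂ (M.map (algebraMap ℝ ℂ))) := by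
  unfold specRad
  congr 1
  ext r
  exact ⟨fun ⟨μ, hμ, hr⟩ => ⟨μ, hμ, hr.symm⟩, fun ⟨μ, hμ, hr⟩ => ⟨μ, hμ, hr.symm⟩⟩

theorem norm_le_specRad {n : ℕ} {M : Matrix (Fin n) (Fin n) ℝ} {μ : ℂ}
    (hμ : μ ∈ spectrum ℂ (M.map (algebraMap ℝ ℂ))) : ‖μ‖ ≤ specRad M := by
  rw [specRad_eq_sSup_image]
  exact le_csSup ((M.map (algebraMap ℝ ℂ)).finite_spectrum.image _).bddAbove ⟨μ, hμ, rfl⟩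

theorem spectralRadius_le_ofReal_specRad {n : ℕ} (M : Matrix (Fin n) (Fin n) ℝ) :
    spectralRadius ℂ (M.map (algebraMap ℝ ℂ)) ≤ ENNReal.ofReal (specRad M) :=
  iSup₂_le fun _ hμ => by
    rw [← ENNReal.ofReal_coe_nnreal, coe_nnnorm]
    exact ENNReal.ofReal_le_ofReal (norm_le_specRad hμ)

theorem exists_mem_spectrum_norm_eq_specRad {n : ℕ} {M : Matrix (Fin n) (Fin n) ℝ}
    (h : specRad M ≠ 0) : ∃ μ ∈ spectrum ℂ (M.map (algebraMap ℝ ℂ)), ‖μ‖ = specRad M := by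
  rw [specRad_eq_sSup_image] at h ⊢
  have hne : ((‖·‖) '' spectrum ℂ (M.map (algebraMap ℝ ℂ))).Nonempty :=
    Set.nonempty_iff_ne_empty.2 fun he => h (he ▸ Real.sSup_empty)
  exact hne.csSup_mem ((M.map (algebraMap ℝ ℂ)).finite_spectrum.image _)

theorem stmt_4_general (n : ℕ) (M : Matrix (Fin n) (Fin n) ℝ)
    (hnonneg : ∀ i j, 0 ≤ M i j)
    (hirr : MatIrreducible M)
    (hρ : specRad M = 1)
    (z : Fin n → ℝ) (hz_nonneg : ∀ i, 0 ≤ z i) (hz_sum : ∑ i, z i = 1)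
    (k : ℝ → (Fin n → ℝ))
    (hk : ∀ δ ∈ Set.Ioo (0 : ℝ) 1, k δ = δ • Matrix.vecMul (k δ) M + z) :
    ∃ c : Fin n → ℝ,
      (∀ i, 0 ≤ c i) ∧ c ≠ 0 ∧ Matrix.vecMul c M = c ∧
      Tendsto (fun δ : ℝ => (1 - δ) • k δ) (𝓝[<] 1) (𝓝 c) := by
  obtain ⟨i₀, hi₀⟩ : ∃ i, 0 < z i := by
    by_contra! h
    linarith [Finset.sum_nonpos (s := Finset.univ) fun i _ => h i]
  have : Nonempty (Fin n) := ⟨i₀⟩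
  have hM : M.IsIrreducible := (isIrreducible_iff_exists_pow_pos hnonneg).2 hirr
  have hρM : spectralRadius ℂ (M.map (algebraMap ℝ ℂ)) ≤ 1 := by
    simpa [hρ] using spectralRadius_le_ofReal_specRad M
  obtain ⟨μ, hμ, hμ1⟩ := exists_mem_spectrum_norm_eq_specRad (M := M) (by simp [hρ])
  obtain ⟨x, hx, hxM⟩ := hM.exists_pos_vecMul_eq hρM hμ (hμ1.trans hρ)
  obtain ⟨w, hw, hwM⟩ := hM.transpose.exists_pos_vecMul_eq
    (by rwa [transpose_map, spectralRadius_transpose]) (by rwa [transpose_map, spectrum_transpose])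
    (hμ1.trans hρ)
  rw [vecMul_transpose] at hwM
  have ha : 0 < z ⬝ᵥ w / x ⬝ᵥ w :=
    div_pos (Finset.sum_pos' (fun j _ => mul_nonneg (hz_nonneg j) (hw j).le)
        ⟨i₀, Finset.mem_univ i₀, mul_pos hi₀ (hw i₀)⟩)
      (Finset.sum_pos (fun j _ => mul_pos (hx j) (hw j)) Finset.univ_nonempty)
  refine ⟨(z ⬝ᵥ w / x ⬝ᵥ w) • x, fun i => smul_nonneg ha.le (hx i).le,
    smul_ne_zero ha.ne' fun h => (hx i₀).ne' (congrFun h i₀), by rw [smul_vecMul, hxM],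
    hM.tendsto_one_sub_smul hx hxM hw hwM hz_nonneg hk⟩

theorem stmt_4 (n : ℕ) (hn : 2 ≤ n) (M : Matrix (Fin n) (Fin n) ℝ)
    (hnonneg : ∀ i j, 0 ≤ M i j)
    (hirr : MatIrreducible M)
    (hρ : specRad M = 1)
    (z : Fin n → ℝ) (hz_nonneg : ∀ i, 0 ≤ z i) (hz_sum : ∑ i, z i = 1)
    (k : ℝ → (Fin n → ℝ))
    (hk : ∀ δ ∈ Set.Ioo (0 : ℝ) 1, k δ = δ • Matrix.vecMul (k δ) M + z) :
    ∃ c : Fin n → ℝ,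
      (∀ i, 0 ≤ c i) ∧ c ≠ 0 ∧ Matrix.vecMul c M = c ∧
      Tendsto (fun δ : ℝ => (1 - δ) • k δ) (𝓝[<] 1) (𝓝 c) :=
  stmt_4_general n M hnonneg hirr hρ z hz_nonneg hz_sum k hk
end

section
/- Consider the network game with payoffs u_i(x) = −(γ_i/2)x_i² + (β_i + ∑_{j≠i} g_{ij} x_j) x_i where γ_i > 0, β_i > 0, g_{ij} ≥ 0. Set b_i = β_i/γ_i and m_{ij} = g_{ij}/γ_i (with m_{ii} = 0). If ρ(M) < 1, then x* = (I − M)^{-1} b is entrywise positive and is the unique Nash equilibrium: for each i, x_i* maximizes u_i over x_i ≥ 0 holding the other coordinates of x* fixed. -/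
/-!
Gelfand's formula turns `ρ(M) < 1` into `M ^ k → 0`. Then `1 - M` is invertible and
`(1 - M)⁻¹ = lim ∑_{l<k} M ^ l` is entrywise nonnegative, so `x* = b + M x* ≥ b > 0`.
Each payoff is a concave quadratic in the player's own action, maximised on `[0, ∞)` at
`(β_i + ∑_{j ≠ i} g_ij x_j) / γ_i ≥ 0` when `x ≥ 0`; so a nonnegative profile is a Nash
equilibrium exactly when it solves `(1 - M) x = b`.
-/

open Matrix Filter Topology

open scoped ENNReal NNReal

section BanachAlgebra

variable {A : Type*} [NormedRing A] [NormedAlgebra ℂ A] [CompleteSpace A]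

theorem tendsto_pow_atTop_nhds_zero_of_spectralRadius_lt_one {a : A}
    (ha : spectralRadius ℂ a < 1) : Tendsto (a ^ ·) atTop (𝓝 0) := by
  obtain ⟨c, hac, hc1⟩ := exists_between ha
  have hgelfand := spectrum.pow_nnnorm_pow_one_div_tendsto_nhds_spectralRadius a
  have hle : ∀ᶠ k : ℕ in atTop, (‖a ^ k‖₊ : ℝ≥0∞) ≤ c ^ k := by
    filter_upwards [hgelfand.eventually_lt_const hac, eventually_gt_atTop 0] with k hk hk0
    rw [one_div, ENNReal.rpow_inv_lt_iff (by positivity), ENNReal.rpow_natCast] at hk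
    exact hk.le
  have h0 : Tendsto (fun k : ℕ => (‖a ^ k‖₊ : ℝ≥0∞)) atTop (𝓝 0) :=
    tendsto_of_tendsto_of_tendsto_of_le_of_le' tendsto_const_nhds
      (ENNReal.tendsto_pow_atTop_nhds_zero_of_lt_one hc1) (.of_forall fun _ => zero_le) hle
  rw [← ENNReal.coe_zero, ENNReal.tendsto_coe, ← NNReal.tendsto_coe] at h0
  exact tendsto_zero_iff_norm_tendsto_zero.mpr h0

theorem tendsto_pow_atTop_nhds_zero_of_forall_spectrum_norm_lt_one {a : A}
    (ha : ∀ z ∈ spectrum ℂ a, ‖z‖ < 1) : Tendsto (a ^ ·) atTop (𝓝 0) := by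
  rcases subsingleton_or_nontrivial A with hA | hA
  · simpa only [Subsingleton.elim _ (0 : A)] using tendsto_const_nhds
  refine tendsto_pow_atTop_nhds_zero_of_spectralRadius_lt_one ?_
  simpa using spectrum.spectralRadius_lt_of_forall_lt a (r := 1)
    fun z hz => by simpa [← NNReal.coe_lt_coe] using ha z hz

end BanachAlgebra

namespace Matrix

variable {ι : Type*} [Fintype ι] [DecidableEq ι]

theorem tendsto_pow_atTop_nhds_zero_of_forall_spectrum_norm_lt_one {A : Matrix ι ι ℂ}
    (hA : ∀ z ∈ spectrum ℂ A, ‖z‖ < 1) : Tendsto (A ^ ·) atTop (𝓝 0) := by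
  -- Any Banach-algebra norm will do: its topology is the product topology.
  let _ := Matrix.linftyOpNormedRing (n := ι) (α := ℂ)
  let _ := Matrix.linftyOpNormedAlgebra (n := ι) (R := ℂ) (α := ℂ)
  have : CompleteSpace (Matrix ι ι ℂ) := FiniteDimensional.complete ℂ _
  exact _root_.tendsto_pow_atTop_nhds_zero_of_forall_spectrum_norm_lt_one hA

theorem tendsto_pow_atTop_nhds_zero_of_specRad_lt_one {n : ℕ}
    {M : Matrix (Fin n) (Fin n) ℝ}    (hM : specRad M < 1) : Tendsto (M ^ ·) atTop (𝓝 0) := by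
  have hbdd :
      BddAbove {r : ℝ | ∃ μ : ℂ, μ ∈ spectrum ℂ (M.map (algebraMap ℝ ℂ)) ∧ r = ‖μ‖} :=
    ((M.map (algebraMap ℝ ℂ)).finite_spectrum.image (‖·‖)).bddAbove.mono
      (by rintro _ ⟨μ, hμ, rfl⟩; exact ⟨μ, hμ, rfl⟩)
  have hspec : ∀ z ∈ spectrum ℂ (M.map (algebraMap ℝ ℂ)), ‖z‖ < 1 := fun z hz =>
    (le_csSup hbdd ⟨z, hz, rfl⟩).trans_lt hM
  have hmap : ∀ k : ℕ, M ^ k = ((M.map (algebraMap ℝ ℂ)) ^ k).map Complex.re := fun k => by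
    rw [← RingHom.mapMatrix_apply, ← map_pow]
    ext; simp
  simp_rw [hmap]
  simpa [Function.comp_def] using
    ((continuous_id.matrix_map Complex.continuous_re).tendsto 0).comp
      (tendsto_pow_atTop_nhds_zero_of_forall_spectrum_norm_lt_one hspec)

theorem det_one_sub_ne_zero_of_tendsto_pow {K : Type*} [Field K] [TopologicalSpace K]
    [IsTopologicalRing K] [T1Space K] {M : Matrix ι ι K} (hM : Tendsto (M ^ ·) atTop (𝓝 0)) :
    (1 - M).det ≠ 0 := by
  have hdet : Tendsto (fun k : ℕ => (1 - M ^ k).det) atTop (𝓝 1) := by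
    simpa [Function.comp_def] using
      ((continuous_id.matrix_det).tendsto (1 - 0)).comp ((tendsto_const_nhds (x := 1)).sub hM)
  obtain ⟨k, hk⟩ := (hdet.eventually_ne one_ne_zero).exists
  intro h
  rw [← mul_neg_geom_sum, det_mul, h, zero_mul] at hk
  exact hk rfl

theorem tendsto_geom_sum_nhds_inv_one_sub {K : Type*} [Field K] [TopologicalSpace K]
    [IsTopologicalRing K] [T1Space K] {M : Matrix ι ι K} (hM : Tendsto (M ^ ·) atTop (𝓝 0)) :
    Tendsto (fun k => ∑ l ∈ Finset.range k, M ^ l) atTop (𝓝 (1 - M)⁻¹) := by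
  have hsum : ∀ k, ∑ l ∈ Finset.range k, M ^ l = (1 - M)⁻¹ * (1 - M ^ k) := fun k => by
    rw [← mul_neg_geom_sum, ← mul_assoc,
      nonsing_inv_mul _ (det_one_sub_ne_zero_of_tendsto_pow hM).isUnit, one_mul]
  simp_rw [hsum]
  simpa using tendsto_const_nhds.mul ((tendsto_const_nhds (x := 1)).sub hM)

section OrderedField

variable {K : Type*} [Field K] [LinearOrder K] [IsStrictOrderedRing K] [TopologicalSpace K]
  [OrderTopology K] [IsTopologicalRing K] {M : Matrix ι ι K}

theorem inv_one_sub_apply_nonneg (hM0 : ∀ i j, 0 ≤ M i j)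
    (hM : Tendsto (M ^ ·) atTop (𝓝 0)) (i j : ι) : 0 ≤ (1 - M)⁻¹ i j :=
  ge_of_tendsto' ((((continuous_apply j).comp (continuous_apply i)).tendsto _).comp
      (tendsto_geom_sum_nhds_inv_one_sub hM)) fun k => by
    change 0 ≤ (∑ l ∈ Finset.range k, M ^ l) i j
    rw [sum_apply]
    exact Finset.sum_nonneg fun l _ => pow_apply_nonneg hM0 l i j

theorem inv_one_sub_mulVec_pos (hM0 : ∀ i j, 0 ≤ M i j)
    (hM : Tendsto (M ^ ·) atTop (𝓝 0)) {b : ι → K} (hb : ∀ i, 0 < b i) (i : ι) :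
    0 < ((1 - M)⁻¹ *ᵥ b) i := by
  set x := (1 - M)⁻¹ *ᵥ b
  have hx0 : ∀ j, 0 ≤ x j := fun j => Finset.sum_nonneg fun l _ =>
    mul_nonneg (inv_one_sub_apply_nonneg hM0 hM j l) (hb l).le
  have hfix : x = b + M *ᵥ x := by
    have hsolve : (1 - M) *ᵥ x = b := by
      rw [mulVec_mulVec, mul_nonsing_inv _ (det_one_sub_ne_zero_of_tendsto_pow hM).isUnit,
        one_mulVec]
    rw [← hsolve, sub_mulVec, one_mulVec, sub_add_cancel]
  rw [hfix]
  exact add_pos_of_pos_of_nonneg (hb i)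
    (Finset.sum_nonneg fun j _ => mul_nonneg (hM0 i j) (hx0 j))

end OrderedField

end Matrix

theorem quadratic_le_iff_mul_eq {γ c x : ℝ} (hγ : 0 < γ) (hc : 0 ≤ c) :
    (∀ y, 0 ≤ y → -(γ / 2) * y ^ 2 + c * y ≤ -(γ / 2) * x ^ 2 + c * x) ↔ γ * x = c := by
  have hgap : ∀ y, -(γ / 2) * y ^ 2 + c * y = c ^ 2 / (2 * γ) - γ / 2 * (y - c / γ) ^ 2 := by
    intro y; field_simp; ring
  simp_rw [hgap]
  constructor
  · intro h
    have hx := h (c / γ) (div_nonneg hc hγ.le)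
    rw [sub_self] at hx
    have hsq : (x - c / γ) ^ 2 = 0 := by nlinarith [sq_nonneg (x - c / γ)]
    rw [sq_eq_zero_iff, sub_eq_zero] at hsq
    rw [hsq, mul_div_cancel₀ c hγ.ne']
  · intro h y _
    rw [← h, mul_div_cancel_left₀ x hγ.ne', sub_self]
    nlinarith [sq_nonneg (y - x)]

section NetworkGame

variable {ι : Type*} [Fintype ι] [DecidableEq ι] {γ β : ι → ℝ} {g : Matrix ι ι ℝ}
  {u : ι → (ι → ℝ) → ℝ}

theorem payoff_update
    (hu : ∀ i x, u i x =
      -(γ i / 2) * (x i) ^ 2 + (β i + ∑ j ∈ Finset.univ.erase i, g i j * x j) * x i)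
    (i : ι) (x : ι → ℝ) (y : ℝ) :
    u i (Function.update x i y) =
      -(γ i / 2) * y ^ 2 + (β i + ∑ j ∈ Finset.univ.erase i, g i j * x j) * y := by
  rw [hu, Function.update_self]
  congr 3
  exact Finset.sum_congr rfl fun j hj => by rw [Function.update_of_ne (Finset.ne_of_mem_erase hj)]

theorem forall_payoff_update_le_iff (hγ : ∀ i, 0 < γ i) (hβ : ∀ i, 0 < β i)
    (hg : ∀ i j, i ≠ j → 0 ≤ g i j)
    (hu : ∀ i x, u i x =
      -(γ i / 2) * (x i) ^ 2 + (β i + ∑ j ∈ Finset.univ.erase i, g i j * x j) * x i)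
    {x : ι → ℝ} (hx : ∀ j, 0 ≤ x j) (i : ι) :
    (∀ y, 0 ≤ y → u i (Function.update x i y) ≤ u i x) ↔
      γ i * x i = β i + ∑ j ∈ Finset.univ.erase i, g i j * x j := by
  have hc : 0 ≤ β i + ∑ j ∈ Finset.univ.erase i, g i j * x j :=
    add_nonneg (hβ i).le <| Finset.sum_nonneg fun j hj =>
      mul_nonneg (hg i j (Finset.ne_of_mem_erase hj).symm) (hx j)
  conv_lhs => enter [y, 2, 2]; rw [← Function.update_eq_self i x]
  simp_rw [payoff_update hu]
  exact quadratic_le_iff_mul_eq (hγ i) hc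

theorem one_sub_mulVec_eq_iff (hγ : ∀ i, 0 < γ i) {M : Matrix ι ι ℝ}
    (hM : ∀ i j, M i j = if i = j then 0 else g i j / γ i)
    {b : ι → ℝ} (hb : ∀ i, b i = β i / γ i) (x : ι → ℝ) :
    (1 - M) *ᵥ x = b ↔ ∀ i, γ i * x i = β i + ∑ j ∈ Finset.univ.erase i, g i j * x j := by
  refine funext_iff.trans (forall_congr' fun i => ?_)
  have hMx : (M *ᵥ x) i = (∑ j ∈ Finset.univ.erase i, g i j * x j) / γ i := by
    rw [mulVec, dotProduct, ← Finset.sum_erase_add _ _ (Finset.mem_univ i), hM i i, if_pos rfl,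
      zero_mul, add_zero, Finset.sum_div]
    exact Finset.sum_congr rfl fun j hj => by
      rw [hM i j, if_neg (Finset.ne_of_mem_erase hj).symm, div_mul_eq_mul_div]
  rw [sub_mulVec, one_mulVec, Pi.sub_apply, hMx, hb, sub_eq_iff_eq_add, ← add_div,
    eq_div_iff (hγ i).ne', mul_comm]

end NetworkGame

theorem stmt_5_general (n : ℕ)
    (γ β : Fin n → ℝ) (hγ : ∀ i, 0 < γ i) (hβ : ∀ i, 0 < β i)
    (g : Matrix (Fin n) (Fin n) ℝ) (hg : ∀ i j, i ≠ j → 0 ≤ g i j)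
    (u : Fin n → (Fin n → ℝ) → ℝ)
    (hu : ∀ i x, u i x =
      -(γ i / 2) * (x i) ^ 2 + (β i + ∑ j ∈ Finset.univ.erase i, g i j * x j) * x i)
    (M : Matrix (Fin n) (Fin n) ℝ)
    (hM : ∀ i j, M i j = if i = j then 0 else g i j / γ i)
    (b : Fin n → ℝ) (hb : ∀ i, b i = β i / γ i)
    (hρ : specRad M < 1)
    (xstar : Fin n → ℝ) (hxstar : xstar = (1 - M)⁻¹.mulVec b) :
    (∀ i, 0 < xstar i) ∧
    (∀ i, ∀ y : ℝ, 0 ≤ y → u i (Function.update xstar i y) ≤ u i xstar) ∧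
    (∀ x : Fin n → ℝ, (∀ i, 0 ≤ x i) →
      (∀ i, ∀ y : ℝ, 0 ≤ y → u i (Function.update x i y) ≤ u i x) →
      x = xstar) := by
  have hM0 : ∀ i j, 0 ≤ M i j := fun i j => by
    rw [hM]
    split_ifs with hij
    exacts [le_rfl, div_nonneg (hg i j hij) (hγ i).le]
  have hpow := tendsto_pow_atTop_nhds_zero_of_specRad_lt_one hρ
  have hunit := (det_one_sub_ne_zero_of_tendsto_pow hpow).isUnit
  have hpos : ∀ i, 0 < xstar i :=
    hxstar ▸ inv_one_sub_mulVec_pos hM0 hpow fun i => hb i ▸ div_pos (hβ i) (hγ i)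
  have hnash : ∀ x : Fin n → ℝ, (∀ i, 0 ≤ x i) →
      ((∀ i, ∀ y : ℝ, 0 ≤ y → u i (Function.update x i y) ≤ u i x) ↔ (1 - M) *ᵥ x = b) :=
    fun x hx => (forall_congr' (forall_payoff_update_le_iff hγ hβ hg hu hx)).trans
      (one_sub_mulVec_eq_iff hγ hM hb x).symm
  refine ⟨hpos, (hnash xstar fun i => (hpos i).le).mpr ?_, fun x hx hx_nash => ?_⟩
  · rw [hxstar, mulVec_mulVec, mul_nonsing_inv _ hunit, one_mulVec]
  · rw [hxstar, ← (hnash x hx).mp hx_nash, mulVec_mulVec, nonsing_inv_mul _ hunit, one_mulVec]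

theorem stmt_5 (n : ℕ) (hn : 1 ≤ n)
    (γ β : Fin n → ℝ) (hγ : ∀ i, 0 < γ i) (hβ : ∀ i, 0 < β i)
    (g : Matrix (Fin n) (Fin n) ℝ) (hg : ∀ i j, i ≠ j → 0 ≤ g i j)
    (u : Fin n → (Fin n → ℝ) → ℝ)
    (hu : ∀ i x, u i x =
      -(γ i / 2) * (x i) ^ 2 + (β i + ∑ j ∈ Finset.univ.erase i, g i j * x j) * x i)
    (M : Matrix (Fin n) (Fin n) ℝ)
    (hM : ∀ i j, M i j = if i = j then 0 else g i j / γ i)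
    (b : Fin n → ℝ) (hb : ∀ i, b i = β i / γ i)
    (hρ : specRad M < 1)
    (xstar : Fin n → ℝ) (hxstar : xstar = (1 - M)⁻¹.mulVec b) :
    (∀ i, 0 < xstar i) ∧
    (∀ i, ∀ y : ℝ, 0 ≤ y → u i (Function.update xstar i y) ≤ u i xstar) ∧
    (∀ x : Fin n → ℝ, (∀ i, 0 ≤ x i) →
      (∀ i, ∀ y : ℝ, 0 ≤ y → u i (Function.update x i y) ≤ u i x) →
      x = xstar) :=
  stmt_5_general n γ β hγ hβ g hg u hu M hM b hb hρ xstar hxstar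
end

section
/- Let B be a nonnegative irreducible n×n matrix with zero diagonal and spectral radius ρ(B) > 1, and let D be an n×n matrix with d_{ii} < 0 for all i and d_{ij} = −d_{ii} B_{ij} for i ≠ j (i.e., B_{ij} = d_{ij}/(−d_{ii})). Then there exists a strictly positive vector c ∈ ℝ^n such that (Dc)_i > 0 for every i. -/
open Matrix Filter Topology

/-!
Take a complex eigenvalue `μ` of `B` with `|μ| > 1` and an eigenvector `v`. By the triangle
inequality `w = |v|` satisfies `|μ| w ≤ B w`, but `w` may vanish somewhere. Irreducibility makes
`A = ∑_{t < N} Bᵗ` entrywise positive for large `N`, so `c = A w` is strictly positive, and since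
`A` commutes with `B` it still satisfies `Bc ≥ |μ| c > c`. Finally `D = -diag(dᵢᵢ) (B - 1)`,
so `(Dc)ᵢ = -dᵢᵢ ((Bc)ᵢ - cᵢ) > 0`.
-/

lemma exists_mem_spectrum_lt_norm_of_lt_specRad {n : ℕ} {M : Matrix (Fin n) (Fin n) ℝ} {r : ℝ}
    (hr : 0 ≤ r) (h : r < specRad M) :
    ∃ μ ∈ spectrum ℂ (M.map (algebraMap ℝ ℂ)), r < ‖μ‖ := by
  by_contra! hle
  refine h.not_ge (Real.sSup_le ?_ hr)
  rintro _ ⟨μ, hμ, rfl⟩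
  exact hle μ hμ

namespace Matrix

variable {ι : Type*} [Fintype ι]

lemma exists_mulVec_eq_smul_of_mem_spectrum {K : Type*} [Field K] [DecidableEq ι]
    {M : Matrix ι ι K} {μ : K} (hμ : μ ∈ spectrum K M) : ∃ v ≠ 0, M *ᵥ v = μ • v := by
  rw [← spectrum_toLin', ← Module.End.hasEigenvalue_iff_mem_spectrum] at hμ
  obtain ⟨v, hv, hv0⟩ := hμ.exists_hasEigenvector
  exact ⟨v, hv0, Module.End.mem_eigenspace_iff.mp hv⟩

lemma mulVec_mono_of_nonneg {R : Type*} [Semiring R] [PartialOrder R] [IsOrderedRing R]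
    {A : Matrix ι ι R} (hA : ∀ i j, 0 ≤ A i j) {u v : ι → R} (huv : u ≤ v) :
    A *ᵥ u ≤ A *ᵥ v := fun i =>
  Finset.sum_le_sum fun j _ => mul_le_mul_of_nonneg_left (huv j) (hA i j)

lemma mulVec_apply_pos_of_nonneg {R : Type*} [Semiring R] [PartialOrder R]
    [IsStrictOrderedRing R] {A : Matrix ι ι R} (hA : ∀ i j, 0 ≤ A i j) {w : ι → R} (hw : 0 ≤ w)
    {i j : ι} (hAij : 0 < A i j) (hwj : 0 < w j) : 0 < (A *ᵥ w) i :=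
  (mul_pos hAij hwj).trans_le <|
    Finset.single_le_sum (fun k _ => mul_nonneg (hA i k) (hw k)) (Finset.mem_univ j)

lemma norm_smul_norm_le_mulVec_norm {B : Matrix ι ι ℝ} (hB : ∀ i j, 0 ≤ B i j) {μ : ℂ}
    {v : ι → ℂ} (hv : B.map (algebraMap ℝ ℂ) *ᵥ v = μ • v) :
    ‖μ‖ • (fun i => ‖v i‖) ≤ B *ᵥ fun i => ‖v i‖ := by
  intro i
  calc ‖μ‖ * ‖v i‖ = ‖∑ j, (B i j : ℂ) * v j‖ := by
        rw [← norm_mul, ← smul_eq_mul, ← Pi.smul_apply, ← hv]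
        rfl
    _ ≤ ∑ j, ‖(B i j : ℂ) * v j‖ := norm_sum_le _ _
    _ = (B *ᵥ fun i => ‖v i‖) i := by
        refine Finset.sum_congr rfl fun j _ => ?_
        rw [norm_mul, Complex.norm_real, Real.norm_of_nonneg (hB i j)]

lemma smul_mulVec_le_mulVec_mulVec_of_commute {R : Type*} [CommSemiring R] [PartialOrder R]
    [IsOrderedRing R] {A B : Matrix ι ι R} (hAB : Commute A B) (hA : ∀ i j, 0 ≤ A i j) {ρ : R}
    {w : ι → R} (hw : ρ • w ≤ B *ᵥ w) :
    ρ • (A *ᵥ w) ≤ B *ᵥ (A *ᵥ w) := by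
  rw [mulVec_mulVec, ← hAB.eq, ← mulVec_mulVec, ← mulVec_smul]
  exact mulVec_mono_of_nonneg hA hw

lemma eq_neg_diagonal_mul_sub_one {R : Type*} [Ring R] [DecidableEq ι] {B D : Matrix ι ι R}
    (hdiag : ∀ i, B i i = 0) (hoff : ∀ i j, i ≠ j → D i j = -(D i i) * B i j) :
    D = -diagonal (fun i => D i i) * (B - 1) := by
  ext i j
  rw [neg_mul, neg_apply, diagonal_mul, sub_apply, one_apply]
  rcases eq_or_ne i j with rfl | hij
  · simp [hdiag]
  · simp [hij, hoff i j hij]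

end Matrix

lemma MatIrreducible.exists_sum_pow_pos {n : ℕ} {B : Matrix (Fin n) (Fin n) ℝ}
    (hirr : MatIrreducible B) (hB : ∀ i j, 0 ≤ B i j) :
    ∃ N, ∀ i j, 0 < (∑ t ∈ Finset.range N, B ^ t) i j := by
  choose T _ hT using hirr
  set m := Finset.univ.sup fun ij : Fin n × Fin n => T ij.1 ij.2
  refine ⟨m + 1, fun i j => ?_⟩
  have hTm : T i j ∈ Finset.range (m + 1) :=
    Finset.mem_range_succ_iff.mpr (Finset.le_sup (f := fun ij : Fin n × Fin n => T ij.1 ij.2)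
      (Finset.mem_univ (i, j)))
  rw [Matrix.sum_apply]
  exact (hT i j).trans_le <| Finset.single_le_sum (fun t _ => pow_apply_nonneg hB t i j) hTm

theorem stmt_11 (n : ℕ) (B : Matrix (Fin n) (Fin n) ℝ)
    (hnonneg : ∀ i j, 0 ≤ B i j) (hdiag : ∀ i, B i i = 0)
    (hirr : MatIrreducible B) (hρ : 1 < specRad B)
    (D : Matrix (Fin n) (Fin n) ℝ)
    (hDdiag : ∀ i, D i i < 0)
    (hDoff : ∀ i j, i ≠ j → D i j = -(D i i) * B i j) :
    ∃ c : Fin n → ℝ, (∀ i, 0 < c i) ∧ ∀ i, 0 < D.mulVec c i := by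
  obtain ⟨μ, hμ, hμ1⟩ := exists_mem_spectrum_lt_norm_of_lt_specRad zero_le_one hρ
  obtain ⟨v, hv0, hv⟩ := exists_mulVec_eq_smul_of_mem_spectrum hμ
  set w : Fin n → ℝ := fun i => ‖v i‖
  have hw : 0 ≤ w := fun i => norm_nonneg _
  obtain ⟨j, hj⟩ : ∃ j, 0 < w j := by
    obtain ⟨j, hj⟩ := Function.ne_iff.mp hv0
    exact ⟨j, norm_pos_iff.mpr hj⟩
  obtain ⟨N, hN⟩ := hirr.exists_sum_pow_pos hnonneg
  set A := ∑ t ∈ Finset.range N, B ^ t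
  have hA : ∀ i j, 0 ≤ A i j := fun i j => (hN i j).le
  have hc : ∀ i, 0 < (A *ᵥ w) i := fun i => mulVec_apply_pos_of_nonneg hA hw (hN i j) hj
  have hBc : ‖μ‖ • (A *ᵥ w) ≤ B *ᵥ (A *ᵥ w) :=
    smul_mulVec_le_mulVec_mulVec_of_commute
      (Commute.sum_left _ _ _ fun t _ => (Commute.refl B).pow_left t) hA
      (norm_smul_norm_le_mulVec_norm hnonneg hv)
  refine ⟨A *ᵥ w, hc, fun i => ?_⟩
  have hgap : (A *ᵥ w) i < (B *ᵥ (A *ᵥ w)) i :=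
    (lt_mul_of_one_lt_left (hc i) hμ1).trans_le (hBc i)
  rw [eq_neg_diagonal_mul_sub_one hdiag hDoff, ← mulVec_mulVec, neg_mulVec, Pi.neg_apply,
    mulVec_diagonal, sub_mulVec, one_mulVec, Pi.sub_apply, ← neg_mul]
  exact mul_pos (neg_pos.mpr (hDdiag i)) (sub_pos.mpr hgap)
end

section
/- For any nonnegative n×n matrix M, ρ(M) = limsup_{t→∞} (trace(M^t))^{1/t}. -/
/-!
Over `ℂ`, `trace (M ^ t) = ∑ μ, d μ * μ ^ t`, where `μ` runs over the spectrum and `d μ ≥ 1` is the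
dimension of the generalized eigenspace of `μ`. Hence `trace (M ^ t) ≤ (∑ μ, d μ) * ρ ^ t`, which
bounds the `limsup` by `ρ`. Conversely, by compactness of the torus the unimodular numbers `μ / ρ`
with `‖μ‖ = ρ` are simultaneously close to `1` for infinitely many `t`, while the smaller
eigenvalues become negligible; for those `t` the trace is at least a fixed positive multiple of
`ρ ^ t`.
-/

open Matrix Filter Topology

theorem frequently_forall_norm_pow_sub_one_lt {𝕜 ι : Type*} [NormedDivisionRing 𝕜]
    [ProperSpace 𝕜] [Fintype ι] (z : ι → 𝕜) (hz : ∀ i, ‖z i‖ = 1) {δ : ℝ} (hδ : 0 < δ) :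
    ∃ᶠ t in atTop, ∀ i, ‖z i ^ t - 1‖ < δ := by
  have hball (t : ℕ) : (fun i => z i ^ t) ∈ Metric.closedBall (0 : ι → 𝕜) 1 := by
    simp [pi_norm_le_iff_of_nonneg, norm_pow, hz]
  obtain ⟨a, -, φ, hφ, hconv⟩ := tendsto_subseq_of_bounded Metric.isBounded_closedBall hball
  obtain ⟨K, hK⟩ := Metric.cauchySeq_iff'.1 hconv.cauchySeq δ hδ
  refine frequently_atTop.2 fun N => ⟨φ (N + K) - φ K, ?_, fun i => ?_⟩
  · have := hφ.add_le_nat N K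
    omega
  calc ‖z i ^ (φ (N + K) - φ K) - 1‖ = ‖z i ^ φ K * (z i ^ (φ (N + K) - φ K) - 1)‖ := by
        rw [norm_mul, norm_pow, hz, one_pow, one_mul]
    _ = ‖z i ^ φ (N + K) - z i ^ φ K‖ := by
        rw [mul_sub, ← pow_add, Nat.add_sub_cancel' (hφ.monotone (by omega)), mul_one]
    _ ≤ dist (fun i => z i ^ φ (N + K)) (fun i => z i ^ φ K) := by
        rw [← dist_eq_norm]
        exact dist_le_pi_dist (fun i => z i ^ φ (N + K)) (fun i => z i ^ φ K) i
    _ < δ := hK _ (by omega)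

theorem norm_sum_mul_pow_le {S : Finset ℂ} {w : ℂ → ℝ} {ρ : ℝ} (hw : ∀ μ ∈ S, 0 ≤ w μ)
    (hρ : ∀ μ ∈ S, ‖μ‖ ≤ ρ) (t : ℕ) :
    ‖∑ μ ∈ S, (w μ : ℂ) * μ ^ t‖ ≤ (∑ μ ∈ S, w μ) * ρ ^ t := by
  rw [Finset.sum_mul]
  refine (norm_sum_le _ _).trans (Finset.sum_le_sum fun μ hμ => ?_)
  rw [norm_mul, norm_pow, Complex.norm_real, Real.norm_of_nonneg (hw μ hμ)]
  exact mul_le_mul_of_nonneg_left (pow_le_pow_left₀ (norm_nonneg μ) (hρ μ hμ) t) (hw μ hμ)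

theorem exists_frequently_mul_pow_le_re_sum {S : Finset ℂ} {w : ℂ → ℝ} {ρ : ℝ}
    (hw : ∀ μ ∈ S, 0 < w μ) (hρ : ∀ μ ∈ S, ‖μ‖ ≤ ρ) (hρ0 : 0 < ρ) (hmax : ∃ μ ∈ S, ‖μ‖ = ρ) :
    ∃ c > 0, ∃ᶠ t in atTop, c * ρ ^ t ≤ (∑ μ ∈ S, (w μ : ℂ) * μ ^ t).re := by
  classical
  obtain ⟨μ₀, hμ₀, hμ₀ρ⟩ := hmax
  set J := S.filter (‖·‖ = ρ)
  set W := ∑ μ ∈ J, w μ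
  have hW : 0 < W := Finset.sum_pos (fun μ hμ => hw μ (Finset.mem_filter.1 hμ).1)
    ⟨μ₀, Finset.mem_filter.2 ⟨hμ₀, hμ₀ρ⟩⟩
  refine ⟨W / 2, by positivity, ?_⟩
  have hrec : ∃ᶠ t in atTop, ∀ μ : J, ‖((μ : ℂ) / ρ) ^ t - 1‖ < 1 / 4 := by
    refine frequently_forall_norm_pow_sub_one_lt _ (fun μ => ?_) (by norm_num)
    rw [norm_div, Complex.norm_real, Real.norm_of_nonneg hρ0.le,
      (Finset.mem_filter.1 μ.2).2, div_self hρ0.ne']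
  have hsmall : ∀ μ ∈ S.filter (¬‖·‖ = ρ), ‖μ / ρ‖ < 1 := fun μ hμ => by
    rw [Finset.mem_filter] at hμ
    rw [norm_div, Complex.norm_real, Real.norm_of_nonneg hρ0.le, div_lt_one hρ0]
    exact (hρ μ hμ.1).lt_of_ne hμ.2
  have htail : ∀ᶠ t in atTop,
      ‖∑ μ ∈ S.filter (¬‖·‖ = ρ), (w μ : ℂ) * (μ / ρ) ^ t‖ < W / 4 := by
    have hlim := tendsto_finsetSum (S.filter (¬‖·‖ = ρ)) fun μ hμ =>
      (tendsto_pow_atTop_nhds_zero_of_norm_lt_one (hsmall μ hμ)).const_mul (w μ : ℂ)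
    simp only [mul_zero, Finset.sum_const_zero] at hlim
    exact hlim.norm.eventually_lt_const (by rw [norm_zero]; positivity)
  refine (hrec.and_eventually htail).mono fun t ⟨hclose, htail_lt⟩ => ?_
  have hsplit : ∑ μ ∈ S, (w μ : ℂ) * μ ^ t = ((ρ ^ t : ℝ) : ℂ) *
      (∑ μ ∈ J, (w μ : ℂ) * (μ / ρ) ^ t +
        ∑ μ ∈ S.filter (¬‖·‖ = ρ), (w μ : ℂ) * (μ / ρ) ^ t) := by
    rw [Finset.sum_filter_add_sum_filter_not, Finset.mul_sum]
    refine Finset.sum_congr rfl fun μ _ => ?_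
    have hρℂ : (ρ : ℂ) ≠ 0 := by exact_mod_cast hρ0.ne'
    rw [div_pow]
    push_cast
    field_simp
  have hdominant : 3 / 4 * W ≤ (∑ μ ∈ J, (w μ : ℂ) * (μ / ρ) ^ t).re := by
    rw [Complex.re_sum, Finset.mul_sum]
    refine Finset.sum_le_sum fun μ hμ => ?_
    have hre := Complex.abs_re_le_norm ((μ / ρ) ^ t - 1)
    rw [Complex.sub_re, Complex.one_re] at hre
    have hμclose := hclose ⟨μ, hμ⟩
    rw [Complex.re_ofReal_mul]
    nlinarith [abs_le.1 hre, hw μ (Finset.mem_filter.1 hμ).1]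
  have hrest := Complex.abs_re_le_norm (∑ μ ∈ S.filter (¬‖·‖ = ρ), (w μ : ℂ) * (μ / ρ) ^ t)
  calc W / 2 * ρ ^ t
      ≤ ρ ^ t * ((∑ μ ∈ J, (w μ : ℂ) * (μ / ρ) ^ t).re +
          (∑ μ ∈ S.filter (¬‖·‖ = ρ), (w μ : ℂ) * (μ / ρ) ^ t).re) := by
        rw [mul_comm]
        gcongr
        linarith [abs_le.1 hrest]
    _ = (∑ μ ∈ S, (w μ : ℂ) * μ ^ t).re := by
        rw [hsplit, Complex.re_ofReal_mul, Complex.add_re]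

theorem Filter.limsup_eq_of_tendsto_of_eventually_le_of_frequently_le {α β : Type*}
    [ConditionallyCompleteLinearOrder β] [TopologicalSpace β] [OrderTopology β]
    {f : Filter α} [f.NeBot] {u a b : α → β} {x : β} (ha : Tendsto a f (𝓝 x))
    (hb : Tendsto b f (𝓝 x)) (hua : u ≤ᶠ[f] a) (hbu : ∃ᶠ i in f, b i ≤ u i)
    (hu : IsBoundedUnder (· ≥ ·) f u) : limsup u f = x :=
  le_antisymm (ha.limsup_eq ▸ limsup_le_limsup hua hu.isCoboundedUnder_flip ha.isBoundedUnder_le)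
    (hb.liminf_eq ▸ liminf_le_limsup_of_frequently_le hbu hb.isBoundedUnder_ge
      (ha.isBoundedUnder_le.mono_le hua))

theorem Real.mul_pow_rpow_inv_natCast {c ρ : ℝ} (hc : 0 ≤ c) (hρ : 0 ≤ ρ) {t : ℕ} (ht : t ≠ 0) :
    (c * ρ ^ t) ^ (t⁻¹ : ℝ) = c ^ (t⁻¹ : ℝ) * ρ := by
  rw [Real.mul_rpow hc (by positivity), Real.pow_rpow_inv_natCast hρ ht]

theorem tendsto_rpow_inv_natCast_mul {c : ℝ} (hc : 0 < c) (ρ : ℝ) :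
    Tendsto (fun t : ℕ => c ^ (t⁻¹ : ℝ) * ρ) atTop (𝓝 ρ) := by
  simpa using (tendsto_const_nhds.rpow tendsto_inv_atTop_nhds_zero_nat
    (Or.inl hc.ne')).mul_const ρ

theorem limsup_rpow_inv_eq_sSup_norm {S : Finset ℂ} {w : ℂ → ℝ} (hw : ∀ μ ∈ S, 0 < w μ)
    {u : ℕ → ℝ} (hu0 : ∀ t, 0 ≤ u t) (hu : ∀ t, (u t : ℂ) = ∑ μ ∈ S, (w μ : ℂ) * μ ^ t) :
    limsup (fun t : ℕ => u t ^ (t⁻¹ : ℝ)) atTop = sSup (norm '' (S : Set ℂ)) := by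
  set ρ := sSup (norm '' (S : Set ℂ))
  have hρ : ∀ μ ∈ S, ‖μ‖ ≤ ρ := fun μ hμ =>
    le_csSup (S.finite_toSet.image _).bddAbove (Set.mem_image_of_mem _ hμ)
  have hρ0 : 0 ≤ ρ := Real.sSup_nonneg (by rintro _ ⟨μ, -, rfl⟩; exact norm_nonneg μ)
  obtain ⟨c, hc, hlower⟩ : ∃ c > 0, ∃ᶠ t in atTop, c * ρ ^ t ≤ u t := by
    rcases hρ0.eq_or_lt with hρ0 | hρ0
    · refine ⟨1, one_pos, (eventually_ne_atTop 0).frequently.mono fun t ht => ?_⟩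
      rw [← hρ0, zero_pow ht, mul_zero]
      exact hu0 t
    have hS : S.Nonempty := by
      contrapose! hρ0
      simp [ρ, hρ0]
    obtain ⟨μ₀, hμ₀, hμ₀max⟩ := S.exists_max_image norm hS
    have hμ₀ρ : ‖μ₀‖ = ρ := le_antisymm (hρ μ₀ hμ₀)
      (csSup_le ((Finset.coe_nonempty.2 hS).image _) (by rintro _ ⟨μ, hμ, rfl⟩; exact hμ₀max μ hμ))
    simpa [← hu] using exists_frequently_mul_pow_le_re_sum hw hρ hρ0 ⟨μ₀, hμ₀, hμ₀ρ⟩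
  -- the `+ 1` keeps the constant positive when `S = ∅`
  have hupper (t : ℕ) : u t ≤ (∑ μ ∈ S, w μ + 1) * ρ ^ t :=
    calc u t ≤ ‖(u t : ℂ)‖ := by rw [Complex.norm_real]; exact Real.le_norm_self _
      _ ≤ (∑ μ ∈ S, w μ) * ρ ^ t := hu t ▸ norm_sum_mul_pow_le (fun μ hμ => (hw μ hμ).le) hρ t
      _ ≤ (∑ μ ∈ S, w μ + 1) * ρ ^ t := by gcongr; linarith
  have hW : 0 < ∑ μ ∈ S, w μ + 1 := by
    linarith [Finset.sum_nonneg fun μ hμ => (hw μ hμ).le]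
  refine limsup_eq_of_tendsto_of_eventually_le_of_frequently_le
    (tendsto_rpow_inv_natCast_mul hW ρ) (tendsto_rpow_inv_natCast_mul hc ρ) ?_ ?_
    (isBoundedUnder_of_eventually_ge (.of_forall fun t => Real.rpow_nonneg (hu0 t) _))
  · filter_upwards [eventually_ne_atTop 0] with t ht
    rw [← Real.mul_pow_rpow_inv_natCast hW.le hρ0 ht]
    exact Real.rpow_le_rpow (hu0 t) (hupper t) (by positivity)
  · refine (hlower.and_eventually (eventually_ne_atTop 0)).mono fun t ⟨hct, ht⟩ => ?_
    rw [← Real.mul_pow_rpow_inv_natCast hc.le hρ0 ht]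
    exact Real.rpow_le_rpow (by positivity) hct (by positivity)

theorem LinearMap.trace_pow_eq_finrank_mul_pow_of_isNilpotent {K V : Type*} [Field K]
    [AddCommGroup V] [Module K V] [FiniteDimensional K V] {g : Module.End K V} {μ : K}
    (h : IsNilpotent (g - algebraMap K _ μ)) (t : ℕ) :
    trace K V (g ^ t) = Module.finrank K V * μ ^ t := by
  induction t with
  | zero => simp
  | succ t ih =>
    rw [pow_succ, Module.End.mul_eq_comp,
      trace_comp_eq_mul_of_commute_of_isNilpotent μ ((Commute.refl g).pow_left t) h, ih]
    ring

namespace Module.End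

variable {K V : Type*} [Field K] [AddCommGroup V] [Module K V] [FiniteDimensional K V]

theorem maxGenEigenspace_ne_bot_iff_mem_spectrum {f : Module.End K V} {μ : K} :
    f.maxGenEigenspace μ ≠ ⊥ ↔ μ ∈ spectrum K f := by
  rw [← hasUnifEigenvalue_iff_mem_spectrum,
    ← hasUnifEigenvalue_iff_hasUnifEigenvalue_one (k := ⊤) (by simp)]
  rfl

theorem finrank_maxGenEigenspace_pos {f : Module.End K V} {μ : K} (hμ : μ ∈ spectrum K f) :
    0 < finrank K (f.maxGenEigenspace μ) :=
  have := Submodule.nontrivial_iff_ne_bot.2 (maxGenEigenspace_ne_bot_iff_mem_spectrum.2 hμ)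
  Module.finrank_pos

theorem trace_pow_eq_sum_finrank_maxGenEigenspace_mul_pow [IsAlgClosed K] (f : Module.End K V)
    {S : Finset K} (hS : (S : Set K) = spectrum K f) (t : ℕ) :
    LinearMap.trace K V (f ^ t) = ∑ μ ∈ S, finrank K (f.maxGenEigenspace μ) * μ ^ t := by
  classical
  have hInt := DirectSum.isInternal_submodule_of_iSupIndep_of_iSup_eq_top
    f.independent_maxGenEigenspace f.iSup_maxGenEigenspace_eq_top
  have hne : {μ | f.maxGenEigenspace μ ≠ ⊥} = S := by
    ext μ
    rw [Set.mem_ofPred_eq, hS, maxGenEigenspace_ne_bot_iff_mem_spectrum]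
  have hfin : {μ | f.maxGenEigenspace μ ≠ ⊥}.Finite := hne ▸ S.finite_toSet
  have hmaps (μ : K) := f.mapsTo_maxGenEigenspace_of_comm (Commute.refl f) μ
  rw [LinearMap.trace_eq_sum_trace_restrict' hInt hfin
    fun μ => f.mapsTo_maxGenEigenspace_of_comm ((Commute.refl f).pow_right t) μ,
    show hfin.toFinset = S by simp [hne]]
  refine Finset.sum_congr rfl fun μ _ => ?_
  rw [← pow_restrict t (hmaps μ)]
  refine LinearMap.trace_pow_eq_finrank_mul_pow_of_isNilpotent ?_ t
  convert f.isNilpotent_restrict_maxGenEigenspace_sub_algebraMap μ using 1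
  ext
  rfl

end Module.End

theorem Matrix.trace_pow_eq_sum_finrank_maxGenEigenspace_mul_pow {K ι : Type*} [Field K]
    [IsAlgClosed K] [Fintype ι] [DecidableEq ι] (A : Matrix ι ι K) (t : ℕ) :
    (A ^ t).trace = ∑ μ ∈ A.finite_spectrum.toFinset,
      Module.finrank K (Module.End.maxGenEigenspace (toLinAlgEquiv' A) μ) * μ ^ t := by
  rw [← trace_toLin'_eq, show toLin' (A ^ t) = toLinAlgEquiv' A ^ t from
    map_pow (toLinAlgEquiv' : Matrix ι ι K ≃ₐ[K] _) A t]
  exact Module.End.trace_pow_eq_sum_finrank_maxGenEigenspace_mul_pow _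
    (by rw [Set.Finite.coe_toFinset, AlgEquiv.spectrum_eq]) t

theorem stmt_16 (n : ℕ) (M : Matrix (Fin n) (Fin n) ℝ)
    (hnonneg : ∀ i j, 0 ≤ M i j) :
    specRad M = Filter.limsup (fun t : ℕ => ((M ^ t).trace) ^ ((t : ℝ)⁻¹)) atTop := by
  set A := M.map (algebraMap ℝ ℂ)
  have hspec : specRad M = sSup (norm '' (A.finite_spectrum.toFinset : Set ℂ)) := by
    rw [specRad, Set.Finite.coe_toFinset]
    congr 1
    ext
    simp [A, eq_comm]
  have hmult : ∀ μ ∈ A.finite_spectrum.toFinset,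
      (0 : ℝ) < Module.finrank ℂ (Module.End.maxGenEigenspace (toLinAlgEquiv' A) μ) :=
    fun μ hμ => Nat.cast_pos.2 <| Module.End.finrank_maxGenEigenspace_pos <| by
      rwa [AlgEquiv.spectrum_eq, ← Set.Finite.mem_toFinset]
  have htrace (t : ℕ) : (((M ^ t).trace : ℝ) : ℂ) = ∑ μ ∈ A.finite_spectrum.toFinset,
      ((Module.finrank ℂ (Module.End.maxGenEigenspace (toLinAlgEquiv' A) μ) : ℝ) : ℂ) * μ ^ t := by
    rw [← Complex.coe_algebraMap, AddMonoidHom.map_trace, Matrix.map_pow,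
      trace_pow_eq_sum_finrank_maxGenEigenspace_mul_pow]
    push_cast
    rfl
  rw [hspec, limsup_rpow_inv_eq_sSup_norm (u := fun t => (M ^ t).trace) hmult
    (fun t => Finset.sum_nonneg fun i _ => pow_apply_nonneg hnonneg t i i) htrace]
end
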